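/- arXiv:2106.14810 — 4 statements merged into one kernel-verified Lean document; each statement's English description precedes it below -/
import Mathlib

section
/- For every natural number n there exists a constant C_n > 0 such that the following holds: for every ε > 0, every Δ ∈ (0, 1], and all r, r' ∈ ℝ³ with ‖r'‖ = 1, ‖r‖ ≤ 2, ‖r‖ ≥ Δ and ‖r − r'‖ ≥ Δ, the perturbing function 𝓗_P : x ↦ −ε/‖x − r'‖ + ε/‖x‖ + ε·⟨x, r'⟩ satisfies ‖Dⁿ𝓗_P(r)‖ ≤ C_n·ε/Δ^{n+1}, where Dⁿ𝓗_P(r) is the n-th iterated Fréchet derivative at r; in particular for n = 0, |𝓗_P(r)| ≤ C₀·ε/Δ. -/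
/-!
`y ↦ ‖y‖⁻¹` is homogeneous of degree `-1`, so its `n`-th derivative is homogeneous of degree
`-(n + 1)`; bounding it on the compact unit sphere gives `‖Dⁿ‖·‖⁻¹(y)‖ ≤ M / ‖y‖ ^ (n + 1)`.
Applied at `r` and, by translation invariance, at `r - r'`, this controls the two Kepler terms
of `𝓗_P` by `ε M / Δ ^ (n + 1)` each, while the linear term contributes at most
`2 ε ≤ 2 ε / Δ ^ (n + 1)`.
-/

open Set

section Scaling

variable {𝕜 E F : Type*} [NontriviallyNormedField 𝕜] [NormedAddCommGroup E] [NormedSpace 𝕜 E]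
  [NormedAddCommGroup F] [NormedSpace 𝕜 F]

theorem iteratedFDeriv_const_smul_apply_of_ne_zero {c : 𝕜} (hc : c ≠ 0) (f : E → F) (n : ℕ)
    (x : E) : iteratedFDeriv 𝕜 n (fun y => c • f y) x = c • iteratedFDeriv 𝕜 n f x := by
  ext m
  simpa [Function.comp_def, Units.smul_def, ContinuousLinearEquiv.smulLeft_apply_apply] using
    congr($((ContinuousLinearEquiv.smulLeft (Units.mk0 c hc) : F ≃L[𝕜] F).iteratedFDeriv_comp_left
      (f := f) (x := x) (i := n)) m)

theorem iteratedFDeriv_comp_const_smul_of_ne_zero {c : 𝕜} (hc : c ≠ 0) (f : E → F) (n : ℕ)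
    (x : E) :
    iteratedFDeriv 𝕜 n (fun y => f (c • y)) x = c ^ n • iteratedFDeriv 𝕜 n f (c • x) := by
  have h := (ContinuousLinearEquiv.smulLeft (Units.mk0 c hc) : E ≃L[𝕜] E)
    |>.iteratedFDerivWithin_comp_right f uniqueDiffOn_univ (mem_univ _) (x := x) n
  simp only [preimage_univ, iteratedFDerivWithin_univ] at h
  ext m
  simpa [Function.comp_def, Units.smul_def, ContinuousMultilinearMap.map_smul_univ] using
    congr($h m)

theorem ContinuousLinearMap.norm_iteratedFDeriv_le_max (L : E →L[𝕜] F) (n : ℕ) (x : E) :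
    ‖iteratedFDeriv 𝕜 n L x‖ ≤ ‖L‖ * max ‖x‖ 1 := by
  rcases n with _ | _ | n
  · rw [norm_iteratedFDeriv_zero]
    exact L.le_opNorm x |>.trans (by gcongr; exact le_max_left _ _)
  · rw [norm_iteratedFDeriv_one, L.fderiv]
    exact le_mul_of_one_le_right (norm_nonneg L) (le_max_right _ _)
  · have hD : fderiv 𝕜 L = fun _ => L := funext fun _ => L.fderiv
    rw [← norm_iteratedFDeriv_fderiv, hD, iteratedFDeriv_const_of_ne n.succ_ne_zero, Pi.zero_apply,
      norm_zero]
    positivity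

end Scaling

theorem norm_iteratedFDeriv_norm_inv {E : Type*} [NormedAddCommGroup E] [NormedSpace ℝ E]
    (n : ℕ) {x : E} (hx : x ≠ 0) :
    ‖iteratedFDeriv ℝ n (fun y : E => ‖y‖⁻¹) x‖ =
      ‖iteratedFDeriv ℝ n (fun y : E => ‖y‖⁻¹) (‖x‖⁻¹ • x)‖ / ‖x‖ ^ (n + 1) := by
  have hx' : ‖x‖ ≠ 0 := norm_ne_zero_iff.2 hx
  have hhomog : (fun y : E => ‖‖x‖ • y‖⁻¹) = fun y => ‖x‖⁻¹ • ‖y‖⁻¹ := by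
    ext y
    simp [norm_smul, mul_comm]
  have h := iteratedFDeriv_comp_const_smul_of_ne_zero hx' (fun y : E => ‖y‖⁻¹) n (‖x‖⁻¹ • x)
  rw [hhomog, iteratedFDeriv_const_smul_apply_of_ne_zero (inv_ne_zero hx'), smul_smul,
    mul_inv_cancel₀ hx', one_smul] at h
  have hnorm := congr(‖$h‖)
  simp only [norm_smul, norm_inv, norm_pow, norm_norm] at hnorm
  rw [inv_mul_eq_iff_eq_mul₀ hx'] at hnorm
  rw [eq_div_iff (pow_ne_zero _ hx'), hnorm]
  ring

section InnerProductSpace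

variable {E : Type*} [NormedAddCommGroup E] [InnerProductSpace ℝ E]

theorem exists_norm_iteratedFDeriv_norm_inv_le [FiniteDimensional ℝ E] (n : ℕ) :
    ∃ M, 0 ≤ M ∧ ∀ x : E, x ≠ 0 →
      ‖iteratedFDeriv ℝ n (fun y : E => ‖y‖⁻¹) x‖ ≤ M / ‖x‖ ^ (n + 1) := by
  obtain ⟨C, hC⟩ := (isCompact_sphere (0 : E) 1).exists_bound_of_continuousOn
    (f := iteratedFDeriv ℝ n (fun y : E => ‖y‖⁻¹)) fun u hu =>
      (((contDiffAt_norm ℝ (ne_zero_of_mem_unit_sphere ⟨u, hu⟩)).inv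
        (norm_ne_zero_iff.2 (ne_zero_of_mem_unit_sphere ⟨u, hu⟩))).continuousAt_iteratedFDeriv
        le_rfl).continuousWithinAt
  refine ⟨max C 0, le_max_right _ _, fun x hx => ?_⟩
  rw [norm_iteratedFDeriv_norm_inv n hx]
  gcongr
  exact (hC _ (by simp [norm_smul, hx])).trans (le_max_left _ _)

noncomputable def heliocentricPerturbation (ε : ℝ) (r' x : E) : ℝ :=
  -ε / ‖x - r'‖ + ε / ‖x‖ + ε * inner ℝ x r'

theorem norm_iteratedFDeriv_heliocentricPerturbation_le {ε : ℝ} (hε : 0 ≤ ε) {r' x : E}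
    (hx : x ≠ 0) (hxr : x ≠ r') (n : ℕ) :
    ‖iteratedFDeriv ℝ n (heliocentricPerturbation ε r') x‖ ≤
      ε * ‖iteratedFDeriv ℝ n (fun y : E => ‖y‖⁻¹) (x - r')‖ +
        ε * ‖iteratedFDeriv ℝ n (fun y : E => ‖y‖⁻¹) x‖ + ε * (‖r'‖ * max ‖x‖ 1) := by
  have hsmooth : ∀ {y : E}, y ≠ 0 → ContDiffAt ℝ n (fun z : E => ‖z‖⁻¹) y := fun hy =>
    (contDiffAt_norm ℝ hy).inv (norm_ne_zero_iff.2 hy)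
  have hshift : ContDiffAt ℝ n (fun y : E => ‖y - r'‖⁻¹) x :=
    (hsmooth (sub_ne_zero.2 hxr)).comp (f := fun y => y - r') x
      (contDiffAt_id.sub contDiffAt_const)
  have h₁ : ContDiffAt ℝ n (fun y : E => (-ε) • ‖y - r'‖⁻¹) x := hshift.const_smul _
  have h₂ : ContDiffAt ℝ n (fun y : E => ε • ‖y‖⁻¹) x := (hsmooth hx).const_smul _
  have h₃ : ContDiffAt ℝ n (fun y : E => ε • innerSL ℝ r' y) x :=
    (innerSL ℝ r').contDiff.contDiffAt.const_smul _
  have hH : heliocentricPerturbation ε r' =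
      fun y => (-ε) • ‖y - r'‖⁻¹ + ε • ‖y‖⁻¹ + ε • innerSL ℝ r' y := by
    ext y
    simp [heliocentricPerturbation, div_eq_mul_inv, real_inner_comm]
  rw [hH, fun_iteratedFDeriv_add_apply (h₁.add h₂) h₃, fun_iteratedFDeriv_add_apply h₁ h₂,
    iteratedFDeriv_const_smul_apply' hshift, iteratedFDeriv_comp_sub (f := fun z : E => ‖z‖⁻¹),
    iteratedFDeriv_const_smul_apply' (hsmooth hx),
    iteratedFDeriv_const_smul_apply' (innerSL ℝ r').contDiff.contDiffAt]
  refine norm_add₃_le.trans ?_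
  simp only [norm_smul, Real.norm_eq_abs, abs_neg, abs_of_nonneg hε]
  gcongr
  simpa only [innerSL_apply_norm] using (innerSL ℝ r').norm_iteratedFDeriv_le_max n x

end InnerProductSpace

/-- Lemma 1 of the paper, estimate on the perturbing function: for every `n` there is a
constant `Cₙ > 0` such that for all `ε > 0`, `Δ ∈ (0,1]`, and positions `r, r' ∈ ℝ³` with
`‖r'‖ = 1`, `‖r‖ ≤ 2`, `‖r‖ ≥ Δ`, `‖r - r'‖ ≥ Δ`, the perturbation
`𝓗_P(x) = -ε/‖x - r'‖ + ε/‖x‖ + ε⟨x, r'⟩` satisfies `‖Dⁿ𝓗_P(r)‖ ≤ Cₙ ε/Δ^{n+1}`;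
in particular for `n = 0`, `|𝓗_P(r)| ≤ C₀ ε/Δ`. -/
theorem perturbation_iteratedFDeriv_bound (n : ℕ) :
    ∃ C : ℝ, 0 < C ∧ ∀ (ε Δ : ℝ), 0 < ε → 0 < Δ → Δ ≤ 1 →
      ∀ r r' : EuclideanSpace ℝ (Fin 3), ‖r'‖ = 1 → ‖r‖ ≤ 2 → Δ ≤ ‖r‖ → Δ ≤ ‖r - r'‖ →
        ‖iteratedFDeriv ℝ n
            (fun x : EuclideanSpace ℝ (Fin 3) =>
              -ε / ‖x - r'‖ + ε / ‖x‖ + ε * (inner ℝ x r' : ℝ)) r‖ ≤ C * ε / Δ ^ (n + 1) ∧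
        (n = 0 → |(-ε / ‖r - r'‖ + ε / ‖r‖ + ε * (inner ℝ r r' : ℝ))| ≤ C * ε / Δ) := by
  obtain ⟨M, hM0, hM⟩ := exists_norm_iteratedFDeriv_norm_inv_le (E := EuclideanSpace ℝ (Fin 3)) n
  refine ⟨2 * M + 2, by positivity, fun ε Δ hε hΔ hΔ1 r r' hr' hr2 hrΔ hrr'Δ => ?_⟩
  have hinv : ∀ y : EuclideanSpace ℝ (Fin 3), Δ ≤ ‖y‖ →
      ‖iteratedFDeriv ℝ n (fun z : EuclideanSpace ℝ (Fin 3) => ‖z‖⁻¹) y‖ ≤ M / Δ ^ (n + 1) :=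
    fun y hy => (hM y (norm_pos_iff.1 (hΔ.trans_le hy))).trans (by gcongr)
  have hr0 : r ≠ 0 := norm_pos_iff.1 (hΔ.trans_le hrΔ)
  have hrr' : r ≠ r' := sub_ne_zero.1 (norm_pos_iff.1 (hΔ.trans_le hrr'Δ))
  have hmain : ‖iteratedFDeriv ℝ n (heliocentricPerturbation ε r') r‖ ≤
      (2 * M + 2) * ε / Δ ^ (n + 1) :=
    calc _ ≤ ε * (M / Δ ^ (n + 1)) + ε * (M / Δ ^ (n + 1)) + ε * 2 := by
          refine (norm_iteratedFDeriv_heliocentricPerturbation_le hε.le hr0 hrr' n).trans ?_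
          rw [hr', one_mul]
          gcongr
          exacts [hinv _ hrr'Δ, hinv _ hrΔ, max_le hr2 one_le_two]
      _ ≤ ε * (M / Δ ^ (n + 1)) + ε * (M / Δ ^ (n + 1)) + 2 * ε / Δ ^ (n + 1) := by
          gcongr
          rw [mul_comm]
          exact le_div_self (by positivity) (by positivity) (pow_le_one₀ hΔ.le hΔ1)
      _ = (2 * M + 2) * ε / Δ ^ (n + 1) := by ring
  refine ⟨hmain, fun hn => ?_⟩
  subst hn
  simpa [heliocentricPerturbation] using hmain
end

section
/- Let g : ℝ → ℝ be continuous, 2π-periodic, with ∫₀^{2π} g(s) ds = 0, and define S(λ) = (1/(2π))·∫₀^{2π} s·g(λ + s) ds. Then S is 2π-periodic, differentiable, S'(λ) = g(λ) for every λ ∈ ℝ, and sup_{λ∈ℝ} |S(λ)| ≤ π·sup_{λ∈ℝ} |g(λ)|. -/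
open Real

/-! Substituting `u = λ + s` writes `2π · S(λ)` as `∫_λ^{λ+2π} u g(u) du` minus `λ` times the mean
of `g`, which vanishes. By the fundamental theorem of calculus and periodicity,
`2π · S'(λ) = (λ + 2π) g(λ + 2π) - λ g(λ) = 2π g(λ)`. The bound uses `∫₀^{2π} s ds = 2π²`. -/

namespace Function.Periodic

variable {g : ℝ → ℝ} {T : ℝ}

theorem integral_mul_comp_add_eq (hper : Periodic g T) (hg : Continuous g)
    (hmean : ∫ s in (0 : ℝ)..T, g s = 0) (l : ℝ) :
    ∫ s in (0 : ℝ)..T, s * g (l + s) = ∫ u in l..l + T, u * g u := by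
  have hshift : ∫ s in (0 : ℝ)..T, s * g (l + s) = ∫ u in l..l + T, (u - l) * g u := by
    simpa only [add_sub_cancel_left, add_zero] using
      intervalIntegral.integral_comp_add_left (fun u => (u - l) * g u) l (a := 0) (b := T)
  have hwindow_mean : ∫ u in l..l + T, g u = 0 := by
    rw [hper.intervalIntegral_add_eq l 0, zero_add, hmean]
  have hsplit : ∫ u in l..l + T, (u - l) * g u
      = (∫ u in l..l + T, u * g u) - l * ∫ u in l..l + T, g u := by
    have hint_id : IntervalIntegrable (fun u => u * g u) MeasureTheory.volume l (l + T) :=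
      (continuous_id.mul hg).intervalIntegrable _ _
    have hint_const : IntervalIntegrable (fun u => l * g u) MeasureTheory.volume l (l + T) :=
      (continuous_const.mul hg).intervalIntegrable _ _
    rw [← intervalIntegral.integral_const_mul, ← intervalIntegral.integral_sub hint_id hint_const]
    simp only [sub_mul]
  rw [hshift, hsplit, hwindow_mean, mul_zero, sub_zero]

theorem integral_mul_comp_add (hper : Periodic g T) (k : ℝ → ℝ) (a b : ℝ) :
    Periodic (fun l => ∫ s in a..b, k s * g (l + s)) T := fun l => by
  simp only [add_right_comm l T, hper _]

theorem hasDerivAt_integral_mul_self (hper : Periodic g T) (hg : Continuous g) (l : ℝ) :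
    HasDerivAt (fun x => ∫ u in x..x + T, u * g u) (T * g l) l := by
  have hF : Continuous fun u => u * g u := continuous_id.mul hg
  have hdiff : (fun x => ∫ u in x..x + T, u * g u)
      = fun x => (∫ u in (0 : ℝ)..x + T, u * g u) - ∫ u in (0 : ℝ)..x, u * g u := by
    funext x
    rw [intervalIntegral.integral_interval_sub_left (hF.intervalIntegrable _ _)
      (hF.intervalIntegrable _ _)]
  have hupper := ((hF.integral_hasStrictDerivAt 0 (l + T)).hasDerivAt).comp_add_const l T
  have hlower := (hF.integral_hasStrictDerivAt 0 l).hasDerivAt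
  have hderiv := hupper.sub hlower
  rw [hper l, ← sub_mul, add_sub_cancel_left] at hderiv
  rw [hdiff]
  exact hderiv

end Function.Periodic

theorem abs_integral_id_mul_le {g : ℝ → ℝ} {T M : ℝ} (hT : 0 ≤ T)
    (hM : ∀ t, |g t| ≤ M) : |∫ s in (0 : ℝ)..T, s * g s| ≤ T ^ 2 / 2 * M := by
  calc |∫ s in (0 : ℝ)..T, s * g s| ≤ ∫ s in (0 : ℝ)..T, s * M := by
        rw [← Real.norm_eq_abs]
        refine intervalIntegral.norm_integral_le_of_norm_le hT ?_
          ((continuous_id.mul_const M).intervalIntegrable (μ := MeasureTheory.volume) _ _)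
        refine Filter.Eventually.of_forall fun s hs => ?_
        rw [Real.norm_eq_abs, abs_mul, abs_of_nonneg hs.1.le]
        exact mul_le_mul_of_nonneg_left (hM s) hs.1.le
    _ = T ^ 2 / 2 * M := by rw [intervalIntegral.integral_mul_const, integral_id]; ring

/-- Construction of the generating function of the averaging transformation: if `g` is
continuous, `2π`-periodic with zero mean, then `S(λ) = (1/2π)∫₀^{2π} s·g(λ+s) ds` is
`2π`-periodic, differentiable with `S' = g`, and `sup |S| ≤ π·sup |g|`. -/
theorem generating_function_of_averaging (g : ℝ → ℝ) (hg : Continuous g)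
    (hper : Function.Periodic g (2 * π))
    (hmean : (∫ s in (0 : ℝ)..(2 * π), g s) = 0)
    (S : ℝ → ℝ)
    (hS : ∀ l : ℝ, S l = (1 / (2 * π)) * ∫ s in (0 : ℝ)..(2 * π), s * g (l + s)) :
    Function.Periodic S (2 * π) ∧
    (∀ l : ℝ, HasDerivAt S (g l) l) ∧
    (∀ l : ℝ, |S l| ≤ π * ⨆ t : ℝ, |g t|) := by
  have hπ : 0 < 2 * π := by positivity
  have hS_window : S = fun l => (1 / (2 * π)) * ∫ u in l..l + 2 * π, u * g u := by
    funext l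
    rw [hS, hper.integral_mul_comp_add_eq hg hmean]
  have hbdd : BddAbove (Set.range fun t => |g t|) :=
    ((hper.comp abs).compact_of_continuous hπ.ne' hg.abs).bddAbove
  refine ⟨fun l => ?_, fun l => ?_, fun l => ?_⟩
  · rw [hS, hS]
    congr 1
    exact hper.integral_mul_comp_add (fun s => s) 0 (2 * π) l
  · rw [hS_window]
    have hderiv := (hper.hasDerivAt_integral_mul_self hg l).const_mul (1 / (2 * π))
    rwa [show 1 / (2 * π) * (2 * π * g l) = g l by field_simp] at hderiv
  · have hint := abs_integral_id_mul_le hπ.le fun t => le_ciSup hbdd (l + t)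
    rw [hS, abs_mul, abs_of_pos (by positivity)]
    calc 1 / (2 * π) * |∫ s in (0 : ℝ)..2 * π, s * g (l + s)|
        ≤ 1 / (2 * π) * ((2 * π) ^ 2 / 2 * ⨆ t, |g t|) := mul_le_mul_of_nonneg_left hint (by positivity)
      _ = π * ⨆ t, |g t| := by field_simp
end

section
/- Fix ε ∈ ℝ and σ ∈ {π/3, −π/3}. Let r'(t) = (cos t, sin t) ∈ ℝ² and r(t) = (cos(t + σ), sin(t + σ)) ∈ ℝ². Then r is a solution of the heliocentric equation of motion, i.e., r̈(t) = −(1−ε)·r(t)/‖r(t)‖³ − ε·(r(t) − r'(t))/‖r(t) − r'(t)‖³ − ε·r'(t)/‖r'(t)‖³ for all t ∈ ℝ. (In the synodic reference frame these are the Lagrange equilibria L₄ and L₅, at which the particle lies at the vertex of an equilateral triangle formed with the Sun and the planet, φ = ±60° and R = 1.) -/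
open Real

/-- The point of the Euclidean plane with coordinates `(x, y)`. -/
noncomputable def toE2 (x y : ℝ) : EuclideanSpace ℝ (Fin 2) :=
  (WithLp.equiv 2 (Fin 2 → ℝ)).symm ![x, y]

/-!
Both bodies move uniformly on the unit circle, so `r̈ = -r`. Since `σ = ±π/3`, the Sun, the
planet and the particle form an equilateral triangle of side `1`, so every inverse cube
in the equation of motion equals `1`; the direct and the indirect pull of the planet,
`-ε (r - r')` and `-ε r'`, then add up to `-ε r`, and the right-hand side is `-r` as well.
-/

lemma toE2_neg (x y : ℝ) : -toE2 x y = toE2 (-x) (-y) := by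
  ext i; fin_cases i <;> rfl

lemma toE2_sub (a b c d : ℝ) : toE2 a b - toE2 c d = toE2 (a - c) (b - d) := by
  ext i; fin_cases i <;> rfl

lemma norm_toE2 (x y : ℝ) : ‖toE2 x y‖ = √(x ^ 2 + y ^ 2) := by
  simp [EuclideanSpace.norm_eq, Fin.sum_univ_two, toE2]

lemma hasDerivAt_toE2 {f g : ℝ → ℝ} {f' g' t : ℝ} (hf : HasDerivAt f f' t)
    (hg : HasDerivAt g g' t) : HasDerivAt (fun s ↦ toE2 (f s) (g s)) (toE2 f' g') t := by
  have basis (x y : ℝ) : toE2 x y = x • toE2 1 0 + y • toE2 0 1 := by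
    ext i; fin_cases i <;> simp [toE2, WithLp.equiv_symm_apply]
  rw [basis f' g']
  exact ((hf.smul_const _).add (hg.smul_const _)).congr_of_eventuallyEq
    (.of_forall fun s ↦ basis (f s) (g s))

noncomputable def unitVec (θ : ℝ) : EuclideanSpace ℝ (Fin 2) := toE2 (cos θ) (sin θ)

lemma norm_unitVec (θ : ℝ) : ‖unitVec θ‖ = 1 := by
  rw [unitVec, norm_toE2, cos_sq_add_sin_sq, sqrt_one]

lemma unitVec_add_pi (θ : ℝ) : unitVec (θ + π) = -unitVec θ := by
  rw [unitVec, unitVec, cos_add_pi, sin_add_pi, toE2_neg]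

lemma norm_unitVec_sub_sq (a b : ℝ) : ‖unitVec a - unitVec b‖ ^ 2 = 2 - 2 * cos (a - b) := by
  rw [unitVec, unitVec, toE2_sub, norm_toE2, sq_sqrt (by positivity), cos_sub]
  nlinarith [cos_sq_add_sin_sq a, cos_sq_add_sin_sq b]

lemma norm_unitVec_sub_of_cos_eq {a b : ℝ} (h : cos (a - b) = 1 / 2) :
    ‖unitVec a - unitVec b‖ = 1 := by
  have := norm_unitVec_sub_sq a b
  rw [h] at this
  nlinarith [norm_nonneg (unitVec a - unitVec b)]

lemma hasDerivAt_unitVec (θ : ℝ) : HasDerivAt unitVec (unitVec (θ + π / 2)) θ := by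
  rw [unitVec, cos_add_pi_div_two, sin_add_pi_div_two]
  exact hasDerivAt_toE2 (hasDerivAt_cos θ) (hasDerivAt_sin θ)

lemma deriv_unitVec_add_const (σ : ℝ) :
    deriv (fun s ↦ unitVec (s + σ)) = fun s ↦ unitVec (s + (σ + π / 2)) :=
  funext fun s ↦ by rw [deriv_comp_add_const, (hasDerivAt_unitVec _).deriv, add_assoc]

lemma deriv_deriv_unitVec_add_const (σ : ℝ) :
    deriv (deriv fun s ↦ unitVec (s + σ)) = fun s ↦ -unitVec (s + σ) := by
  simp only [deriv_unitVec_add_const, add_assoc, add_halves, ← unitVec_add_pi]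

lemma heliocentric_accel_of_equilateral {E : Type*} [SeminormedAddCommGroup E] [NormedSpace ℝ E]
    (ε : ℝ) {x y : E} (hx : ‖x‖ = 1) (hy : ‖y‖ = 1) (hxy : ‖x - y‖ = 1) :
    -((1 - ε) / ‖x‖ ^ 3) • x - (ε / ‖x - y‖ ^ 3) • (x - y) - (ε / ‖y‖ ^ 3) • y = -x := by
  rw [hx, hy, hxy]
  module

/-- The Lagrange equilateral configurations `L₄` and `L₅`: the particle
`r(t) = (cos(t+σ), sin(t+σ))` with `σ = ±π/3` solves the heliocentric equation of motion
of the planar circular restricted three-body problem with planet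
`r'(t) = (cos t, sin t)` and mass parameter `ε`. -/
theorem lagrange_equilateral_solution (ε σ : ℝ) (hσ : σ = π / 3 ∨ σ = -(π / 3))
    (r rp : ℝ → EuclideanSpace ℝ (Fin 2))
    (hrp : ∀ t, rp t = toE2 (cos t) (sin t))
    (hr : ∀ t, r t = toE2 (cos (t + σ)) (sin (t + σ))) :
    ∀ t : ℝ, deriv (deriv r) t =
      -((1 - ε) / ‖r t‖ ^ 3) • r t - (ε / ‖r t - rp t‖ ^ 3) • (r t - rp t)
        - (ε / ‖rp t‖ ^ 3) • rp t := by
  intro t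
  have hrt : r t = unitVec (t + σ) := hr t
  have hrpt : rp t = unitVec t := hrp t
  have hside : ‖r t - rp t‖ = 1 := by
    rw [hrt, hrpt]
    refine norm_unitVec_sub_of_cos_eq ?_
    rw [add_sub_cancel_left]
    rcases hσ with rfl | rfl <;> simp
  rw [heliocentric_accel_of_equilateral ε (hrt ▸ norm_unitVec _) (hrpt ▸ norm_unitVec _) hside,
    show r = fun s ↦ unitVec (s + σ) from funext hr, deriv_deriv_unitVec_add_const]
end

section
/- Let ε ∈ (0, 1), let r : I → ℝ² (I an open interval) be a solution of the heliocentric equation of motion with r(t) ≠ 0 and r(t) ≠ r'(t) for all t ∈ I, and let R(t) = Rot(−t)·r(t) be its synodic coordinates. Then the Jacobi constant is conserved: the function t ↦ C(R(t), R'(t)), where R'(t) is the derivative of R at t, is constant on I. -/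
open Real

/-- Rotation of the Euclidean plane by the angle `α`. -/
noncomputable def rot (α : ℝ) (v : EuclideanSpace ℝ (Fin 2)) : EuclideanSpace ℝ (Fin 2) :=
  toE2 (cos α * v 0 - sin α * v 1) (sin α * v 0 + cos α * v 1)

/-- The circular orbit of the planet: `r'(t) = (cos t, sin t)`. -/
noncomputable def rplanet (t : ℝ) : EuclideanSpace ℝ (Fin 2) := toE2 (cos t) (sin t)

/-- The Jacobi constant of the planar circular restricted three-body problem, in the
synodic reference frame centered on the Sun, with the planet of mass `ε` at `(1,0)`:
`C(P, V) = (P₁-ε)² + P₂² + ε(1-ε) + 2(ε/‖P-(1,0)‖ + (1-ε)/‖P‖) - ‖V‖²`. -/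
noncomputable def jacobiC (ε : ℝ) (P V : EuclideanSpace ℝ (Fin 2)) : ℝ :=
  (P 0 - ε) ^ 2 + (P 1) ^ 2 + ε * (1 - ε) +
    2 * (ε / ‖P - toE2 1 0‖ + (1 - ε) / ‖P‖) - ‖V‖ ^ 2

open scoped RealInnerProductSpace

/-!
Rotating back to the heliocentric frame turns `C(R, R')` into
`ε - 2ε⟪r, r'⟫ + 2ε/‖r - r'‖ + 2(1-ε)/‖r‖ - ‖v‖² + 2⟪J r, v⟫`, where `J` is the quarter turn
(the angular velocity of the synodic frame, so that the planet's velocity is `J r'`):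
up to the constant `ε`, twice the angular momentum minus twice the energy including the indirect
term `ε⟪r, r'⟫`. Along the flow the derivatives of the kinetic and potential terms cancel, and
the remaining torque terms cancel because `J` is skew-adjoint, which is all that is used of `J`.
-/

section InnerProductSpace

variable {E : Type*} [NormedAddCommGroup E] [InnerProductSpace ℝ E]

theorem HasDerivAt.norm {f : ℝ → E} {f' : E} {t : ℝ} (hf : HasDerivAt f f' t) (h0 : f t ≠ 0) :
    HasDerivAt (fun s => ‖f s‖) (⟪f t, f'⟫ / ‖f t‖) t := by
  have h := hf.norm_sq.sqrt (by positivity)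
  simp only [Real.sqrt_sq (norm_nonneg _)] at h
  exact h.congr_deriv (by ring)

noncomputable def inertialJacobi (J : E →L[ℝ] E) (ε : ℝ) (p x v : E) : ℝ :=
  ε - 2 * ε * ⟪x, p⟫ + 2 * ε / ‖x - p‖ + 2 * (1 - ε) / ‖x‖ - ‖v‖ ^ 2 + 2 * ⟪J x, v⟫

theorem hasDerivAt_inertialJacobi {J : E →L[ℝ] E} (hJ : ∀ x y, ⟪J x, y⟫ = -⟪x, J y⟫)
    {ε t : ℝ} {p r v : ℝ → E} (hp : HasDerivAt p (J (p t)) t) (hr : HasDerivAt r (v t) t)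
    (hv : HasDerivAt v
      (-((1 - ε) / ‖r t‖ ^ 3) • r t - (ε / ‖r t - p t‖ ^ 3) • (r t - p t) - ε • p t) t)
    (h0 : r t ≠ 0) (hrp : r t ≠ p t) :
    HasDerivAt (fun s => inertialJacobi J ε (p s) (r s) (v s)) 0 t := by
  have hrp' : r t - p t ≠ 0 := sub_ne_zero.mpr hrp
  have hJr : HasDerivAt (fun s => J (r s)) (J (v t)) t := J.hasFDerivAt.comp_hasDerivAt t hr
  have hsub : HasDerivAt (fun s => r s - p s) (v t - J (p t)) t := hr.sub hp
  have H := (((((hasDerivAt_const t ε).sub ((HasDerivAt.inner ℝ hr hp).const_mul (2 * ε))).add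
    ((hasDerivAt_const t (2 * ε)).div (hsub.norm hrp') (norm_ne_zero_iff.mpr hrp'))).add
    ((hasDerivAt_const t (2 * (1 - ε))).div (hr.norm h0) (norm_ne_zero_iff.mpr h0))).sub
    hv.norm_sq).add ((HasDerivAt.inner ℝ hJr hv).const_mul 2)
  refine H.congr_deriv ?_
  have hskew_right : ∀ x, ⟪x, J x⟫ = 0 := fun x => by
    linarith [hJ x x, real_inner_comm (J x) x]
  have hskew_left : ∀ x, ⟪J x, x⟫ = 0 := fun x => by rw [real_inner_comm, hskew_right]
  simp only [inner_sub_left, inner_sub_right, real_inner_smul_right, hskew_left,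
    hskew_right]
  rw [hJ (r t) (p t), real_inner_comm (v t) (r t), real_inner_comm (v t) (p t)]
  field_simp
  ring

end InnerProductSpace

section Plane

@[simp] lemma toE2_apply_zero (x y : ℝ) : toE2 x y 0 = x := rfl

@[simp] lemma toE2_apply_one (x y : ℝ) : toE2 x y 1 = y := rfl

lemma EuclideanSpace.ext_fin_two {x y : EuclideanSpace ℝ (Fin 2)} (h0 : x 0 = y 0)
    (h1 : x 1 = y 1) : x = y := by
  ext i
  fin_cases i <;> assumption

lemma EuclideanSpace.real_inner_fin_two (x y : EuclideanSpace ℝ (Fin 2)) :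
    ⟪x, y⟫ = x 0 * y 0 + x 1 * y 1 := by
  simp [PiLp.inner_apply, Fin.sum_univ_two, mul_comm]

lemma EuclideanSpace.norm_sq_fin_two (x : EuclideanSpace ℝ (Fin 2)) :
    ‖x‖ ^ 2 = x 0 ^ 2 + x 1 ^ 2 := by
  simp [EuclideanSpace.real_norm_sq_eq, Fin.sum_univ_two]

open EuclideanSpace

noncomputable def quarterTurn : EuclideanSpace ℝ (Fin 2) →L[ℝ] EuclideanSpace ℝ (Fin 2) :=
  LinearMap.toContinuousLinearMap
    { toFun := fun x => toE2 (-x 1) (x 0)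
      map_add' := fun x y => ext_fin_two (by simp; ring) (by simp)
      map_smul' := fun c x => ext_fin_two (by simp) (by simp) }

@[simp] lemma quarterTurn_apply_zero (x : EuclideanSpace ℝ (Fin 2)) : quarterTurn x 0 = -x 1 :=
  rfl

@[simp] lemma quarterTurn_apply_one (x : EuclideanSpace ℝ (Fin 2)) : quarterTurn x 1 = x 0 :=
  rfl

lemma inner_quarterTurn_left (x y : EuclideanSpace ℝ (Fin 2)) :
    ⟪quarterTurn x, y⟫ = -⟪x, quarterTurn y⟫ := by
  simp only [real_inner_fin_two, quarterTurn_apply_zero, quarterTurn_apply_one]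
  ring

lemma norm_rot (α : ℝ) (x : EuclideanSpace ℝ (Fin 2)) : ‖rot α x‖ = ‖x‖ := by
  refine (sq_eq_sq₀ (norm_nonneg _) (norm_nonneg _)).mp ?_
  simp only [norm_sq_fin_two, rot, toE2_apply_zero, toE2_apply_one]
  linear_combination (x 0 ^ 2 + x 1 ^ 2) * cos_sq_add_sin_sq α

lemma rot_sub (α : ℝ) (x y : EuclideanSpace ℝ (Fin 2)) : rot α (x - y) = rot α x - rot α y :=
  ext_fin_two (by simp [rot]; ring) (by simp [rot]; ring)

lemma rot_neg_eq (t : ℝ) (x : EuclideanSpace ℝ (Fin 2)) :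
    rot (-t) x = cos t • x - sin t • quarterTurn x :=
  ext_fin_two (by simp [rot]) (by simp [rot]; ring)

lemma rot_neg_rplanet (t : ℝ) : rot (-t) (rplanet t) = toE2 1 0 :=
  ext_fin_two (by simp [rot, rplanet, ← sq]) (by simp [rot, rplanet]; ring)

lemma norm_rplanet (t : ℝ) : ‖rplanet t‖ = 1 := by
  refine (sq_eq_sq₀ (norm_nonneg _) zero_le_one).mp ?_
  simp only [norm_sq_fin_two, rplanet, toE2_apply_zero, toE2_apply_one, one_pow,
    cos_sq_add_sin_sq]

lemma rplanet_eq (t : ℝ) : rplanet t = cos t • toE2 1 0 + sin t • toE2 0 1 :=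
  ext_fin_two (by simp [rplanet]) (by simp [rplanet])

lemma hasDerivAt_rplanet (t : ℝ) : HasDerivAt rplanet (quarterTurn (rplanet t)) t := by
  rw [funext rplanet_eq]
  exact (((hasDerivAt_cos t).smul_const _).add ((hasDerivAt_sin t).smul_const _)).congr_deriv
    (ext_fin_two (by simp) (by simp))

theorem HasDerivAt.rot_neg {r : ℝ → EuclideanSpace ℝ (Fin 2)} {v : EuclideanSpace ℝ (Fin 2)}
    {t : ℝ} (hr : HasDerivAt r v t) :
    HasDerivAt (fun s => rot (-s) (r s)) (rot (-t) (v - quarterTurn (r t))) t := by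
  simp only [rot_neg_eq]
  exact (((hasDerivAt_cos t).smul hr).sub
    ((hasDerivAt_sin t).smul (quarterTurn.hasFDerivAt.comp_hasDerivAt t hr))).congr_deriv
    (ext_fin_two (by simp; ring) (by simp; ring))

lemma jacobiC_rot_neg (ε t : ℝ) (x v : EuclideanSpace ℝ (Fin 2)) :
    jacobiC ε (rot (-t) x) (rot (-t) (v - quarterTurn x)) =
      inertialJacobi quarterTurn ε (rplanet t) x v := by
  have hsub : rot (-t) x - toE2 1 0 = rot (-t) (x - rplanet t) := by
    rw [rot_sub, rot_neg_rplanet]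
  rw [jacobiC, inertialJacobi, hsub, norm_rot, norm_rot, norm_rot]
  simp only [norm_sq_fin_two, real_inner_fin_two, rot, rplanet, toE2_apply_zero, toE2_apply_one,
    PiLp.sub_apply, quarterTurn_apply_zero, quarterTurn_apply_one, cos_neg, sin_neg]
  linear_combination (x 0 ^ 2 + x 1 ^ 2) * cos_sq_add_sin_sq t

end Plane

theorem jacobi_constant_conserved_general (ε : ℝ) (a b : ℝ)
    (r v : ℝ → EuclideanSpace ℝ (Fin 2))
    (hrv : ∀ t ∈ Set.Ioo a b, HasDerivAt r (v t) t)
    (hacc : ∀ t ∈ Set.Ioo a b, HasDerivAt v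
      (-((1 - ε) / ‖r t‖ ^ 3) • r t - (ε / ‖r t - rplanet t‖ ^ 3) • (r t - rplanet t)
        - (ε / ‖rplanet t‖ ^ 3) • rplanet t) t)
    (hne0 : ∀ t ∈ Set.Ioo a b, r t ≠ 0)
    (hnep : ∀ t ∈ Set.Ioo a b, r t ≠ rplanet t)
    (R : ℝ → EuclideanSpace ℝ (Fin 2)) (hR : ∀ t, R t = rot (-t) (r t)) :
    ∀ t₁ ∈ Set.Ioo a b, ∀ t₂ ∈ Set.Ioo a b,
      jacobiC ε (R t₁) (deriv R t₁) = jacobiC ε (R t₂) (deriv R t₂) := by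
  obtain rfl : R = fun t => rot (-t) (r t) := funext hR
  have hC : ∀ t ∈ Set.Ioo a b, jacobiC ε (rot (-t) (r t)) (deriv (fun s => rot (-s) (r s)) t) =
      inertialJacobi quarterTurn ε (rplanet t) (r t) (v t) := fun t ht => by
    rw [(hrv t ht).rot_neg.deriv, jacobiC_rot_neg]
  have hconst : ∀ t ∈ Set.Ioo a b,
      HasDerivAt (fun s => inertialJacobi quarterTurn ε (rplanet s) (r s) (v s)) 0 t :=
    fun t ht => hasDerivAt_inertialJacobi inner_quarterTurn_left (hasDerivAt_rplanet t) (hrv t ht)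
      (by simpa only [norm_rplanet, one_pow, div_one] using hacc t ht) (hne0 t ht) (hnep t ht)
  intro t₁ h₁ t₂ h₂
  rw [hC t₁ h₁, hC t₂ h₂]
  exact isOpen_Ioo.is_const_of_deriv_eq_zero isPreconnected_Ioo
    (fun t ht => (hconst t ht).differentiableAt.differentiableWithinAt)
    (fun t ht => (hconst t ht).deriv) h₁ h₂

/-- Conservation of the Jacobi constant: along any collisionless solution `r` of the
heliocentric equation of motion of the planar circular restricted three-body problem on
an open interval, the Jacobi constant evaluated on the synodic position
`R(t) = Rot(-t)·r(t)` and the synodic velocity `R'(t)` is constant. -/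
theorem jacobi_constant_conserved (ε : ℝ) (hε : ε ∈ Set.Ioo (0 : ℝ) 1) (a b : ℝ)
    (r v : ℝ → EuclideanSpace ℝ (Fin 2))
    (hrv : ∀ t ∈ Set.Ioo a b, HasDerivAt r (v t) t)
    (hacc : ∀ t ∈ Set.Ioo a b, HasDerivAt v
      (-((1 - ε) / ‖r t‖ ^ 3) • r t - (ε / ‖r t - rplanet t‖ ^ 3) • (r t - rplanet t)
        - (ε / ‖rplanet t‖ ^ 3) • rplanet t) t)
    (hne0 : ∀ t ∈ Set.Ioo a b, r t ≠ 0)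
    (hnep : ∀ t ∈ Set.Ioo a b, r t ≠ rplanet t)
    (R : ℝ → EuclideanSpace ℝ (Fin 2)) (hR : ∀ t, R t = rot (-t) (r t)) :
    ∀ t₁ ∈ Set.Ioo a b, ∀ t₂ ∈ Set.Ioo a b,
      jacobiC ε (R t₁) (deriv R t₁) = jacobiC ε (R t₂) (deriv R t₂) :=
  jacobi_constant_conserved_general ε a b r v hrv hacc hne0 hnep R hR
end
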